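/- arXiv:2508.12492 — 5 statements merged into one kernel-verified Lean document; each statement's English description precedes it below -/
import Mathlib

section
/- Let u, v be real-valued functions, continuous and differentiable on [a,b], with u(a) = v(a). Let f : ℝ × ℝ → ℝ be continuous. If u'(x) - f(x, u(x)) < v'(x) - f(x, v(x)) for all x ∈ [a,b], then u(x) < v(x) for all x ∈ (a,b]. -/
open Set Filter Topology

theorem stmt_1 (a b : ℝ) (hab : a < b) (u v u' v' : ℝ → ℝ) (f : ℝ × ℝ → ℝ)
    (hf : Continuous f)
    (hu : ∀ x ∈ Icc a b, HasDerivAt u (u' x) x)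
    (hv : ∀ x ∈ Icc a b, HasDerivAt v (v' x) x)
    (hinit : u a = v a)
    (hcomp : ∀ x ∈ Icc a b, u' x - f (x, u x) < v' x - f (x, v x)) :
    ∀ x ∈ Ioc a b, u x < v x := by
  intro x0 hx0
  by_contra hcon
  push_neg at hcon
  set w : ℝ → ℝ := fun x => v x - u x with hw
  have hwd : ∀ x ∈ Icc a b, HasDerivAt w (v' x - u' x) x :=
    fun x hx => (hv x hx).sub (hu x hx)
  have hkey : ∀ x ∈ Icc a b, w x = 0 → 0 < v' x - u' x := by
    intro x hx hwx
    have h1 := hcomp x hx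
    have huv : u x = v x := by
      have : v x - u x = 0 := hwx
      linarith
    rw [huv] at h1
    linarith
  have hwa : w a = 0 := by simp [hw, hinit]
  have hamem : a ∈ Icc a b := ⟨le_rfl, hab.le⟩
  have hsub : ∀ c : ℝ, Iio c ⊆ {c}ᶜ := fun c y hy => ne_of_lt hy
  have hsub' : Ioi a ⊆ {a}ᶜ := fun y hy => ne_of_gt hy
  -- slope positivity near a (from the right)
  have hda := hwd a hamem
  have hd0 : 0 < v' a - u' a := hkey a hamem hwa
  have hslope := hasDerivAt_iff_tendsto_slope.mp hda
  have hev : ∀ᶠ x in 𝓝[>] a, 0 < slope w a x :=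
    (hslope.mono_left (nhdsWithin_mono _ hsub')).eventually (eventually_gt_nhds hd0)
  obtain ⟨d, hd, hIoo⟩ := mem_nhdsGT_iff_exists_Ioo_subset.mp hev
  rw [mem_Ioi] at hd
  have hpos_near : ∀ x ∈ Ioo a d, 0 < w x := by
    intro x hx
    have hs : 0 < slope w a x := hIoo hx
    have : slope w a x = (w x - w a) / (x - a) := slope_def_field w a x
    rw [this, hwa, sub_zero] at hs
    have hxa : 0 < x - a := by linarith [hx.1]
    exact (div_pos_iff.mp hs).resolve_right (fun h => absurd hxa (by linarith [h.2])) |>.1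
  set m := min ((a + d) / 2) ((a + x0) / 2) with hm
  have ham : a < m := by
    apply lt_min <;> [linarith [hd] ; linarith [hx0.1]]
  have hmd : m < d := lt_of_le_of_lt (min_le_left _ _) (by linarith)
  have hmx0 : m < x0 := lt_of_le_of_lt (min_le_right _ _) (by linarith [hx0.1])
  have hcontw : ∀ x ∈ Icc a b, ContinuousAt w x := fun x hx => (hwd x hx).continuousAt
  have hIccsub : Icc m x0 ⊆ Icc a b := Icc_subset_Icc ham.le hx0.2
  set T := Icc m x0 ∩ w ⁻¹' Iic 0 with hT
  have hclosed : IsClosed T := by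
    have hco : ContinuousOn w (Icc m x0) :=
      fun x hx => (hcontw x (hIccsub hx)).continuousWithinAt
    exact hco.preimage_isClosed_of_isClosed isClosed_Icc isClosed_Iic
  have hx0T : x0 ∈ T := ⟨⟨hmx0.le, le_rfl⟩, by simp [hw]; linarith⟩
  have hbdd : BddBelow T := ⟨m, fun y hy => hy.1.1⟩
  set c := sInf T with hc
  have hcT : c ∈ T := hclosed.csInf_mem ⟨x0, hx0T⟩ hbdd
  have hmc : m ≤ c := hcT.1.1
  have hac : a < c := lt_of_lt_of_le ham hmc
  have hcb : c ≤ b := le_trans hcT.1.2 hx0.2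
  have hcmem : c ∈ Icc a b := ⟨hac.le, hcb⟩
  have hposIoo : ∀ x ∈ Ioo a c, 0 < w x := by
    intro x hx
    rcases lt_or_ge x m with hxm | hxm
    · exact hpos_near x ⟨hx.1, lt_of_lt_of_le hxm (le_trans hmd.le le_rfl)⟩
    · by_contra hle
      push_neg at hle
      have hxT : x ∈ T := ⟨⟨hxm, le_trans hx.2.le hcT.1.2⟩, hle⟩
      exact absurd (csInf_le hbdd hxT) (not_le.mpr hx.2)
  -- w c = 0
  have hnebot : (𝓝[<] c).NeBot := nhdsLT_neBot c
  have hIooMem : Ioo a c ∈ 𝓝[<] c := Ioo_mem_nhdsLT_of_mem ⟨hac, le_rfl⟩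
  have hwc0 : w c = 0 := by
    have hle : w c ≤ 0 := hcT.2
    have htend : Tendsto w (𝓝[<] c) (𝓝 (w c)) :=
      ((hcontw c hcmem).tendsto).mono_left nhdsWithin_le_nhds
    have hge : 0 ≤ w c :=
      ge_of_tendsto htend (Eventually.mono hIooMem fun x hx => (hposIoo x hx).le)
    linarith
  -- derivative of w at c is positive, get slope contradiction
  have hdc0 : 0 < v' c - u' c := hkey c hcmem hwc0
  have hslopec := hasDerivAt_iff_tendsto_slope.mp (hwd c hcmem)
  have hevc : ∀ᶠ x in 𝓝[<] c, 0 < slope w c x :=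
    (hslopec.mono_left (nhdsWithin_mono _ (hsub c))).eventually (eventually_gt_nhds hdc0)
  obtain ⟨x, hsx, hxIoo⟩ := (hevc.and hIooMem).exists
  have hwx : 0 < w x := hposIoo x hxIoo
  have hxc : x - c < 0 := by linarith [hxIoo.2]
  have : slope w c x = (w x - w c) / (x - c) := slope_def_field w c x
  rw [this, hwc0, sub_zero] at hsx
  have : w x / (x - c) < 0 := div_neg_of_pos_of_neg hwx hxc
  linarith
end

section
/- Let ε > 0 and b > ε. Let W : ℝ → ℝ be continuous and differentiable on (ε, b) and continuous on [ε, b), with W(ε) < -1/3. If H(y) := W'(y)·y + 3·W(y) + 1 < 0 for all y ∈ (ε, b), then W(y) < -1/3 for all y ∈ (ε, b). -/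
/-!
Multiplying by the integrating factor `y ^ 3` turns `H` into a derivative:
`(y ^ 3 * (3 * W y + 1))' = 3 * y ^ 2 * H y`. So `H < 0` makes `y ^ 3 * (3 * W y + 1)` strictly
decreasing on `[ε, b)`; it starts negative at `ε`, hence stays negative, i.e. `W < -1/3`.
-/

open Set

theorem HasDerivAt.pow_mul_natCast_mul_add_one {W : ℝ → ℝ} {w y : ℝ} (hW : HasDerivAt W w y)
    (n : ℕ) :
    HasDerivAt (fun y => y ^ n * (n * W y + 1)) (n * y ^ (n - 1) * (w * y + n * W y + 1)) y := by
  have h := (hasDerivAt_pow n y).mul ((hW.const_mul (n : ℝ)).add_const 1)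
  refine h.congr_deriv ?_
  rcases n with _ | n
  · simp
  · simp only [Nat.add_sub_cancel, pow_succ]
    ring

theorem strictAntiOn_pow_mul_natCast_mul_add_one {ε b : ℝ} (hε : 0 < ε) {n : ℕ} (hn : 0 < n)
    {W W' : ℝ → ℝ} (hWc : ContinuousOn W (Ico ε b))
    (hWd : ∀ y ∈ Ioo ε b, HasDerivAt W (W' y) y)
    (hH : ∀ y ∈ Ioo ε b, W' y * y + n * W y + 1 < 0) :
    StrictAntiOn (fun y => y ^ n * (n * W y + 1)) (Ico ε b) := by
  refine strictAntiOn_of_hasDerivWithinAt_neg (convex_Ico ε b) (by fun_prop)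
    (f' := fun y => n * y ^ (n - 1) * (W' y * y + n * W y + 1)) (fun y hy => ?_) (fun y hy => ?_)
  all_goals rw [interior_Ico] at hy
  · exact ((hWd y hy).pow_mul_natCast_mul_add_one n).hasDerivWithinAt
  · have hy0 : 0 < y := hε.trans hy.1
    exact mul_neg_of_pos_of_neg (by positivity) (hH y hy)

theorem lt_neg_inv_of_deriv_mul_add_natCast_mul_add_one_neg {ε b : ℝ} (hε : 0 < ε) {n : ℕ}
    (hn : 0 < n) {W W' : ℝ → ℝ} (hWc : ContinuousOn W (Ico ε b))
    (hWd : ∀ y ∈ Ioo ε b, HasDerivAt W (W' y) y) (hinit : W ε < -1 / n)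
    (hH : ∀ y ∈ Ioo ε b, W' y * y + n * W y + 1 < 0) :
    ∀ y ∈ Ioo ε b, W y < -1 / n := by
  intro y hy
  have hn' : (0 : ℝ) < n := Nat.cast_pos.mpr hn
  have hy0 : 0 < y := hε.trans hy.1
  have hneg : ∀ x, W x < -1 / n ↔ n * W x + 1 < 0 := fun x => by
    rw [lt_div_iff₀ hn']
    constructor <;> intro h <;> linarith
  have hdecr : y ^ n * (n * W y + 1) < ε ^ n * (n * W ε + 1) :=
    strictAntiOn_pow_mul_natCast_mul_add_one hε hn hWc hWd hH
      (left_mem_Ico.mpr (hy.1.trans hy.2)) (Ioo_subset_Ico_self hy) hy.1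
  have hstart : ε ^ n * (n * W ε + 1) < 0 :=
    mul_neg_of_pos_of_neg (by positivity) ((hneg ε).mp hinit)
  exact (hneg y).mpr (neg_of_mul_neg_right (hdecr.trans hstart) (by positivity))

theorem stmt_2_general (ε b : ℝ) (hε : 0 < ε) (W W' : ℝ → ℝ)
    (hWc : ContinuousOn W (Ico ε b))
    (hWd : ∀ y ∈ Ioo ε b, HasDerivAt W (W' y) y)
    (hinit : W ε < -1/3)
    (hH : ∀ y ∈ Ioo ε b, W' y * y + 3 * W y + 1 < 0) :
    ∀ y ∈ Ioo ε b, W y < -1/3 := by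
  have key := lt_neg_inv_of_deriv_mul_add_natCast_mul_add_one_neg hε (n := 3) (by norm_num) hWc hWd
    (by exact_mod_cast hinit) (by exact_mod_cast hH)
  exact_mod_cast key

theorem stmt_2 (ε b : ℝ) (hε : 0 < ε) (hb : ε < b) (W W' : ℝ → ℝ)
    (hWc : ContinuousOn W (Ico ε b))
    (hWd : ∀ y ∈ Ioo ε b, HasDerivAt W (W' y) y)
    (hinit : W ε < -1/3)
    (hH : ∀ y ∈ Ioo ε b, W' y * y + 3 * W y + 1 < 0) :
    ∀ y ∈ Ioo ε b, W y < -1/3 :=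
  stmt_2_general ε b hε W W' hWc hWd hinit hH
end

section
/- Let ε > 0, z > ε, and let R, W : ℝ → ℝ be differentiable on (ε, z) with R > 0, W(ε) < -1, and suppose on (ε, z) we have W(y) < W(ε), W'(y) < 0, and R'(y) = -(R(y)/(W(y)·y))·(W'(y)·y + 3·W(y) + 1). Then for any differentiable R̃ with R̃(ε) ≥ R(ε) and R̃'(y) = -(R̃(y)/(W(ε)·y))·(3·W(ε)+1) on (ε, z), we have R(y) < R̃(y) for y ∈ (ε, z). -/
open Set

theorem stmt_4 (ε z : ℝ) (hε : 0 < ε) (hz : ε < z)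
    (R W R' W' Rt Rt' : ℝ → ℝ)
    (hR : ∀ y ∈ Ico ε z, HasDerivAt R (R' y) y)
    (hW : ∀ y ∈ Ico ε z, HasDerivAt W (W' y) y)
    (hRpos : ∀ y ∈ Ico ε z, 0 < R y)
    (hWε : W ε < -1)
    (hWlt : ∀ y ∈ Ioo ε z, W y < W ε)
    (hW'neg : ∀ y ∈ Ioo ε z, W' y < 0)
    (hRode : ∀ y ∈ Ioo ε z, R' y = -(R y / (W y * y)) * (W' y * y + 3 * W y + 1))
    (hRt : ∀ y ∈ Ico ε z, HasDerivAt Rt (Rt' y) y)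
    (hRtε : R ε ≤ Rt ε)
    (hRtode : ∀ y ∈ Ioo ε z, Rt' y = -(Rt y / (W ε * y)) * (3 * W ε + 1)) :
    ∀ y ∈ Ioo ε z, R y < Rt y := by
  intro y hy
  set α : ℝ := 3 + (W ε)⁻¹ with hα
  have hWε0 : W ε < 0 := lt_trans hWε (by norm_num)
  set g : ℝ → ℝ := fun t => (Rt t - R t) * t ^ α with hg
  have hsub : Icc ε y ⊆ Ico ε z := Icc_subset_Ico_iff (le_of_lt hy.1) |>.2 ⟨le_refl _, hy.2⟩
  have hgderiv : ∀ t ∈ Ico ε z, HasDerivAt g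
      ((Rt' t - R' t) * t ^ α + (Rt t - R t) * (α * t ^ (α - 1))) t := by
    intro t ht
    have ht0 : 0 < t := lt_of_lt_of_le hε ht.1
    exact ((hRt t ht).sub (hR t ht)).mul
      (Real.hasDerivAt_rpow_const (Or.inl (ne_of_gt ht0)))
  have hmono : StrictMonoOn g (Icc ε y) := by
    apply strictMonoOn_of_deriv_pos (convex_Icc ε y)
    · intro t ht
      exact ((hgderiv t (hsub ht)).continuousAt).continuousWithinAt
    · intro t ht
      rw [interior_Icc] at ht
      have htz : t ∈ Ioo ε z := ⟨ht.1, lt_trans ht.2 hy.2⟩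
      have htI : t ∈ Ico ε z := ⟨le_of_lt htz.1, htz.2⟩
      rw [(hgderiv t htI).deriv]
      have ht0 : 0 < t := lt_trans hε htz.1
      set P : ℝ := t ^ (α - 1) with hP
      have hPpos : 0 < P := Real.rpow_pos_of_pos ht0 _
      have htα : t ^ α = P * t := by
        rw [hP, ← Real.rpow_add_one (ne_of_gt ht0) (α - 1)]
        norm_num
      have hWt : W t < W ε := hWlt t htz
      have hWt0 : W t < 0 := lt_trans hWt hWε0
      have hW't : W' t < 0 := hW'neg t htz
      have hRt' := hRtode t htz
      have hR' := hRode t htz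
      have hRp : 0 < R t := hRpos t htI
      rw [htα, hRt', hR', hα]
      have hkey : (-(Rt t / (W ε * t)) * (3 * W ε + 1) -
          -(R t / (W t * t)) * (W' t * t + 3 * W t + 1)) * (P * t) +
          (Rt t - R t) * ((3 + (W ε)⁻¹) * P)
          = P * (R t * ((W' t * t * W ε + W ε - W t) / (W t * W ε))) := by
        have h1 : W t ≠ 0 := ne_of_lt hWt0
        have h2 : W ε ≠ 0 := ne_of_lt hWε0
        have h3 : t ≠ 0 := ne_of_gt ht0
        field_simp
        ring
      rw [hkey]
      apply mul_pos hPpos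
      apply mul_pos hRp
      apply div_pos
      · nlinarith [mul_pos (mul_pos_of_neg_of_neg hW't hWε0) ht0]
      · exact mul_pos_of_neg_of_neg hWt0 hWε0
  have hy0 : 0 < y := lt_trans hε hy.1
  have hεIcc : ε ∈ Icc ε y := ⟨le_refl _, le_of_lt hy.1⟩
  have hyIcc : y ∈ Icc ε y := ⟨le_of_lt hy.1, le_refl _⟩
  have hlt : g ε < g y := hmono hεIcc hyIcc hy.1
  have hgε : 0 ≤ g ε := by
    have : 0 < (ε : ℝ) ^ α := Real.rpow_pos_of_pos hε _
    have h1 : 0 ≤ Rt ε - R ε := by linarith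
    exact mul_nonneg h1 (le_of_lt this)
  have hyα : 0 < y ^ α := Real.rpow_pos_of_pos hy0 _
  have : 0 < (Rt y - R y) * y ^ α := lt_of_le_of_lt hgε hlt
  nlinarith
end

section
/- Let ε > 0 and let W : ℝ → ℝ be twice differentiable satisfying on (ε, c) the ODE (W'y + 3W + 1)' = (1/2)·W·y·(W'y + W + 1 - R) + ((W'y+3W+1)(W'y+W+1))/(W·y) - (A/(2·W·y))·(W'y+3W+1), where A ∈ {0,1} and R is continuous. If H(y) := W'(y)·y + 3·W(y) + 1 satisfies H(y_p) = 0 at some point y_p ∈ (ε, c) with W(y_p) < 0 and -2·W(y_p) - R(y_p) > 0, then H'(y_p) < 0. -/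
open Set

theorem stmt_6 (ε c A y_p : ℝ) (hε : 0 < ε) (hA : A = 0 ∨ A = 1)
    (W W' R : ℝ → ℝ) (hRc : Continuous R)
    (hW : ∀ y ∈ Ioo ε c, HasDerivAt W (W' y) y)
    (hode : ∀ y ∈ Ioo ε c,
      HasDerivAt (fun y => W' y * y + 3 * W y + 1)
        ((1/2) * W y * y * (W' y * y + W y + 1 - R y)
          + ((W' y * y + 3 * W y + 1) * (W' y * y + W y + 1)) / (W y * y)
          - (A / (2 * W y * y)) * (W' y * y + 3 * W y + 1)) y)
    (hyp : y_p ∈ Ioo ε c)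
    (hH0 : W' y_p * y_p + 3 * W y_p + 1 = 0)
    (hWneg : W y_p < 0)
    (hpos : 0 < -2 * W y_p - R y_p) :
    deriv (fun y => W' y * y + 3 * W y + 1) y_p < 0 := by
  have h := (hode y_p hyp).deriv
  rw [h, hH0]
  have hW1 : W' y_p * y_p + W y_p + 1 = -2 * W y_p := by linarith
  rw [hW1]
  have hy : 0 < y_p := lt_trans hε hyp.1
  simp only [zero_mul, zero_div, mul_zero, add_zero, sub_zero]
  have : (1/2) * W y_p * y_p * (-2 * W y_p - R y_p) < 0 := by
    apply mul_neg_of_neg_of_pos _ hpos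
    have : (1/2 : ℝ) * W y_p < 0 := by linarith
    exact mul_neg_of_neg_of_pos this hy
  linarith
end

section
/- Suppose R, W solve R' = R·W·y·(R + 2W)/(1 - (Wy)²) on an interval where 1 - W(y)²y² ≠ 0, obtained by eliminating W' from the inviscid isothermal self-similar system RW'y = -R'Wy - R(3W+1), R' = -RWy(W'y + W + 1) + R²Wy. Then at any point ȳ with 1 - W(ȳ)²ȳ² = 0, a C¹ solution requires R(ȳ) + 2W(ȳ) = 0. -/
open Set

theorem stmt_19 (a b ybar : ℝ) (hybar : ybar ∈ Ioo a b) (R W : ℝ → ℝ)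
    (hRC1 : ContDiffOn ℝ 1 R (Ioo a b)) (hWC1 : ContDiffOn ℝ 1 W (Ioo a b))
    (hRpos : ∀ y ∈ Ioo a b, 0 < R y)
    (hode1 : ∀ y ∈ Ioo a b,
      R y * deriv W y * y = -(deriv R y) * W y * y - R y * (3 * W y + 1))
    (hode2 : ∀ y ∈ Ioo a b,
      deriv R y = -(R y * W y * y) * (deriv W y * y + W y + 1) + (R y)^2 * W y * y)
    (hsonic : 1 - (W ybar)^2 * ybar^2 = 0) :
    R ybar + 2 * W ybar = 0 := by
  have h1 := hode1 ybar hybar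
  have h2 := hode2 ybar hybar
  have hr := hRpos ybar hybar
  have hw : (W ybar)^2 * ybar^2 = 1 := by linarith
  rw [h2] at h1
  have key : R ybar * (R ybar + 2 * W ybar) = 0 := by linear_combination h1 + (R ybar * deriv W ybar * ybar + R ybar + R ybar * W ybar - (R ybar)^2) * hw
  rcases mul_eq_zero.mp key with h | h
  · exact absurd h hr.ne'
  · exact h
end
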